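/- arXiv:2411.04405 — 5 statements merged into one kernel-verified Lean document; each statement's English description precedes it below -/
import Mathlib

section
/- If E is a local stochastic error of rate p on n qubits and W: Paulis → Paulis is a function such that the support of W(E) is contained in the union of the supports of at most c sets each of which is the image of supp(E) under a map where each output coordinate depends on at most c input coordinates and each input coordinate affects at most c output coordinates, then W(E) is local stochastic with rate c^2 · p^{1/c} (propagation of local stochastic noise through bounded-fan-in/fan-out maps). Specifically: if f: [m] → finset [n] with |f(j)| ≤ c for all j and each i ∈ [n] lies in f(j) for at most c values of j, and F = {j : f(j) ∩ E ≠ ∅}, then for all S ⊆ [m], P[S ⊆ F] ≤ (c·p)^{|S|/c}. -/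
open scoped Classical

/-!
Reveal the error one site at a time. If `T ⊆ F`, pick `j ∈ T`; some `i ∈ f j` lies in `E`,
and there are at most `c` choices of `i`. Adding `i` to the set of sites known to be in `E`
costs a factor `p`, and discards from `T` only the at most `c` indices `j'` with `i ∈ f j'`;
the remaining ones still need an error site disjoint from those revealed so far. Each round
thus costs `c · p` and shrinks `T` by at most `c`, so `⌈|T| / c⌉` rounds are possible.
-/

open Finset

def weight {Ω : Type*} [Fintype Ω] (w : Ω → ℝ) (P : Ω → Prop) [DecidablePred P] : ℝ :=
  ∑ ω ∈ univ.filter P, w ω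

def hitSet {α β : Type*} [DecidableEq α] [Fintype β] (f : β → Finset α) (E : Finset α) :
    Finset β :=
  univ.filter fun j => (f j ∩ E).Nonempty

section Weight

variable {Ω ι : Type*} [Fintype Ω] {w : Ω → ℝ}

lemma weight_mono (hw : ∀ ω, 0 ≤ w ω) {P Q : Ω → Prop} [DecidablePred P] [DecidablePred Q]
    (h : ∀ ω, P ω → Q ω) : weight w P ≤ weight w Q :=
  sum_le_sum_of_subset_of_nonneg (monotone_filter_right _ fun ω _ => h ω) fun ω _ _ => hw ω

lemma weight_le_sum_weight (hw : ∀ ω, 0 ≤ w ω) {P : Ω → Prop} {Q : ι → Ω → Prop}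
    [DecidablePred P] [∀ i, DecidablePred (Q i)] {s : Finset ι}
    (h : ∀ ω, P ω → ∃ i ∈ s, Q i ω) :
    weight w P ≤ ∑ i ∈ s, weight w (Q i) := by
  simp only [weight, sum_filter]
  rw [sum_comm]
  have hnonneg : ∀ ω i, 0 ≤ if Q i ω then w ω else 0 := fun ω i => by
    split_ifs
    exacts [hw ω, le_rfl]
  refine sum_le_sum fun ω _ => ?_
  split_ifs with hP
  · obtain ⟨i, hi, hQ⟩ := h ω hP
    calc w ω = if Q i ω then w ω else 0 := (if_pos hQ).symm
      _ ≤ _ := single_le_sum (fun i _ => hnonneg ω i) hi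
  · exact sum_nonneg fun i _ => hnonneg ω i

end Weight

section HitSet

variable {α β : Type*} [DecidableEq α] [Fintype β] {f : β → Finset α}

lemma exists_insert_subset_of_subset_hitSet {E S : Finset α} {T : Finset β} {j : β}
    (hj : j ∈ T) (hS : S ⊆ E) (hT : T ⊆ hitSet f E) :
    ∃ i ∈ f j, insert i S ⊆ E ∧ T.filter (fun j' => i ∉ f j') ⊆ hitSet f E := by
  obtain ⟨i, hi⟩ := (mem_filter.mp (hT hj)).2
  rw [mem_inter] at hi
  exact ⟨i, hi.1, insert_subset hi.2 hS, (filter_subset _ _).trans hT⟩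

lemma card_le_card_filter_notMem_add {c : ℕ}
    (hfanout : ∀ i, (univ.filter fun j => i ∈ f j).card ≤ c) (T : Finset β) (i : α) :
    T.card ≤ (T.filter fun j => i ∉ f j).card + c := by
  have hhit : (T.filter fun j => i ∈ f j).card ≤ c :=
    (card_le_card (filter_subset_filter _ (subset_univ T))).trans (hfanout i)
  have := card_filter_add_card_filter_not (s := T) (p := fun j => i ∉ f j)
  simp only [not_not] at this
  omega

end HitSet

lemma Nat.ceil_div_le_ceil_div_add_one {a b c : ℕ} (h : a ≤ b + c) :
    ⌈(a : ℝ) / c⌉₊ ≤ ⌈(b : ℝ) / c⌉₊ + 1 := by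
  have hdiv : (a : ℝ) / c ≤ b / c + 1 :=
    calc (a : ℝ) / c ≤ (b + c) / c := by gcongr; exact_mod_cast h
      _ = b / c + c / c := add_div _ _ _
      _ ≤ b / c + 1 := by gcongr; exact div_self_le_one _
  rw [← Nat.ceil_add_one (by positivity)]
  exact Nat.ceil_mono hdiv

section Propagation

variable {Ω α β : Type*} [Fintype Ω] [DecidableEq α] [Fintype β] {w : Ω → ℝ}
  {E : Ω → Finset α} {f : β → Finset α} {c : ℕ} {p : ℝ}

theorem weight_subset_and_subset_hitSet_le (hw : ∀ ω, 0 ≤ w ω) (hp : 0 ≤ p)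
    (hls : ∀ S : Finset α, weight w (fun ω => S ⊆ E ω) ≤ p ^ S.card)
    (hfanin : ∀ j, (f j).card ≤ c)
    (hfanout : ∀ i, (univ.filter fun j => i ∈ f j).card ≤ c) (k : ℕ) (S : Finset α)
    (T : Finset β) (hST : ∀ j ∈ T, Disjoint (f j) S) (hk : k ≤ ⌈(T.card : ℝ) / c⌉₊) :
    weight w (fun ω => S ⊆ E ω ∧ T ⊆ hitSet f (E ω)) ≤ p ^ S.card * (c * p) ^ k := by
  induction k generalizing S T with
  | zero =>
    simpa using (weight_mono hw fun ω (h : S ⊆ E ω ∧ _) => h.1).trans (hls S)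
  | succ k ih =>
    obtain ⟨j, hj⟩ : T.Nonempty := by
      rw [nonempty_iff_ne_empty]
      rintro rfl
      simp at hk
    have hround : ∀ i ∈ f j,
        weight w (fun ω => insert i S ⊆ E ω ∧
            T.filter (fun j' => i ∉ f j') ⊆ hitSet f (E ω))
          ≤ p * (p ^ S.card * (c * p) ^ k) := by
      intro i hi
      have hiS : i ∉ S := disjoint_left.mp (hST j hj) hi
      have hST' : ∀ j' ∈ T.filter (fun j' => i ∉ f j'), Disjoint (f j') (insert i S) := by
        intro j' hj'
        rw [mem_filter] at hj'
        exact disjoint_insert_right.mpr ⟨hj'.2, hST j' hj'.1⟩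
      have hk' : k ≤ ⌈((T.filter fun j' => i ∉ f j').card : ℝ) / c⌉₊ := by
        have := Nat.ceil_div_le_ceil_div_add_one (card_le_card_filter_notMem_add hfanout T i)
        omega
      have := ih _ _ hST' hk'
      rw [card_insert_of_notMem hiS, pow_succ] at this
      linarith
    calc weight w (fun ω => S ⊆ E ω ∧ T ⊆ hitSet f (E ω))
        ≤ ∑ i ∈ f j, weight w
            (fun ω => insert i S ⊆ E ω ∧
              T.filter (fun j' => i ∉ f j') ⊆ hitSet f (E ω)) :=
          weight_le_sum_weight hw fun ω h => exists_insert_subset_of_subset_hitSet hj h.1 h.2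
      _ ≤ (f j).card • (p * (p ^ S.card * (c * p) ^ k)) := sum_le_card_nsmul _ _ _ hround
      _ ≤ c * (p * (p ^ S.card * (c * p) ^ k)) := by
          rw [nsmul_eq_mul]
          gcongr
          exact_mod_cast hfanin j
      _ = p ^ S.card * (c * p) ^ (k + 1) := by ring

end Propagation

theorem stmt_2_general {Ω : Type*} [Fintype Ω] (w : Ω → ℝ)
    (hw : ∀ ω, 0 ≤ w ω)
    (n m c : ℕ) (p : ℝ) (hp0 : 0 ≤ p)
    (E : Ω → Finset (Fin n))
    (hls : ∀ S : Finset (Fin n),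
      ∑ ω ∈ Finset.univ.filter (fun ω => S ⊆ E ω), w ω ≤ p ^ S.card)
    (f : Fin m → Finset (Fin n))
    (hfanin : ∀ j, (f j).card ≤ c)
    (hfanout : ∀ i : Fin n, (Finset.univ.filter (fun j => i ∈ f j)).card ≤ c)
    (T : Finset (Fin m)) :
    ∑ ω ∈ Finset.univ.filter
        (fun ω => T ⊆ Finset.univ.filter (fun j => ((f j) ∩ E ω).Nonempty)), w ω
      ≤ (c * p) ^ (⌈(T.card : ℝ) / c⌉₊) := by
  have h := weight_subset_and_subset_hitSet_le hw hp0 hls hfanin hfanout _ ∅ T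
    (fun _ _ => disjoint_empty_right _) le_rfl
  simp only [card_empty, pow_zero, one_mul, empty_subset, true_and] at h
  exact h

/-- Propagation of local stochastic noise through bounded fan-in/fan-out maps.
If `E ⊆ [n]` is local stochastic of rate `p`, `f : [m] → Finset [n]` has `|f j| ≤ c`
and each `i ∈ [n]` lies in `f j` for at most `c` values of `j`, then the random set
`F = {j : f j ∩ E ≠ ∅}` satisfies `P[T ⊆ F] ≤ (c·p)^⌈|T|/c⌉` for every `T ⊆ [m]`. -/
theorem stmt_2 {Ω : Type*} [Fintype Ω] (w : Ω → ℝ)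
    (hw : ∀ ω, 0 ≤ w ω) (hsum : ∑ ω, w ω = 1)
    (n m c : ℕ) (hc : 0 < c) (p : ℝ) (hp0 : 0 ≤ p)
    (E : Ω → Finset (Fin n))
    (hls : ∀ S : Finset (Fin n),
      ∑ ω ∈ Finset.univ.filter (fun ω => S ⊆ E ω), w ω ≤ p ^ S.card)
    (f : Fin m → Finset (Fin n))
    (hfanin : ∀ j, (f j).card ≤ c)
    (hfanout : ∀ i : Fin n, (Finset.univ.filter (fun j => i ∈ f j)).card ≤ c)
    (T : Finset (Fin m)) :
    ∑ ω ∈ Finset.univ.filter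
        (fun ω => T ⊆ Finset.univ.filter (fun j => ((f j) ∩ E ω).Nonempty)), w ω
      ≤ (c * p) ^ (⌈(T.card : ℝ) / c⌉₊) :=
  stmt_2_general w hw n m c p hp0 E hls f hfanin hfanout T
end

section
/- In the minimum-weight decoding setting, the inferred error has weight at most the true error within every maximal connected component of mismatches: if x, y ∈ F_2^N are vectors with the same syndrome Hx = Hy for a parity-check matrix H whose Tanner-style adjacency graph has the property that the set K of coordinates where x ≠ y is a union of connected components, and y has globally minimum weight among vectors with syndrome Hx, then for any single maximal connected component K of the mismatch set, the weight of y restricted to K is at most the weight of x restricted to K. -/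
open scoped Classical

/-- If `x, y ∈ F_2^N` have the same syndrome `Hx = Hy`, `y` has globally
minimum weight among vectors with syndrome `Hx`, and `K` is a maximal connected
component of the mismatch set `D = {i : x i ≠ y i}` in the check-adjacency graph
(`i ~ j` iff some row of `H` is supported on both), then the weight of `y` restricted
to `K` is at most the weight of `x` restricted to `K`. -/
theorem stmt_7 {M N : ℕ} (H : Matrix (Fin M) (Fin N) (ZMod 2))
    (x y : Fin N → ZMod 2)
    (hsyn : H.mulVec x = H.mulVec y)
    (hmin : ∀ u : Fin N → ZMod 2, H.mulVec u = H.mulVec x →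
      (Finset.univ.filter (fun i => y i ≠ 0)).card ≤
        (Finset.univ.filter (fun i => u i ≠ 0)).card)
    -- the check-adjacency relation
    (adj : Fin N → Fin N → Prop)
    (hadj : ∀ i j, adj i j ↔ i ≠ j ∧ ∃ r : Fin M, H r i ≠ 0 ∧ H r j ≠ 0)
    (K : Finset (Fin N))
    -- `K` consists of mismatch coordinates
    (hKD : ∀ i ∈ K, x i ≠ y i)
    -- `K` is connected within the induced subgraph on the mismatch set
    (hconn : ∀ i ∈ K, ∀ j ∈ K,
      Relation.ReflTransGen (fun a b => a ∈ K ∧ b ∈ K ∧ adj a b) i j)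
    -- `K` is a maximal component: any mismatch coordinate adjacent to `K` lies in `K`
    (hmax : ∀ i ∈ K, ∀ j, adj i j → x j ≠ y j → j ∈ K) :
    (K.filter (fun i => y i ≠ 0)).card ≤ (K.filter (fun i => x i ≠ 0)).card := by
  set u : Fin N → ZMod 2 := fun i => if i ∈ K then x i else y i with hu
  -- u has the same syndrome as x
  have hagree : ∀ r : Fin M, ∀ j, H r j ≠ 0 → (∃ i ∈ K, H r i ≠ 0) → u j = x j := by
    intro r j hj ⟨i, hiK, hi⟩
    by_cases hjK : j ∈ K
    · simp [hu, hjK]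
    · simp only [hu, if_neg hjK]
      by_contra hne
      have hxy : x j ≠ y j := fun h => hne h.symm
      by_cases hij : i = j
      · exact hjK (hij ▸ hiK)
      · exact hjK (hmax i hiK j ((hadj i j).mpr ⟨hij, r, hi, hj⟩) hxy)
  have hsynu : H.mulVec u = H.mulVec x := by
    funext r
    by_cases hrow : ∃ i ∈ K, H r i ≠ 0
    · unfold Matrix.mulVec dotProduct
      apply Finset.sum_congr rfl
      intro j _
      by_cases hj : H r j = 0
      · simp [hj]
      · rw [hagree r j hj hrow]
    · have hKx : ∀ j ∈ K, H r j = 0 := by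
        intro j hj
        by_contra h
        exact hrow ⟨j, hj, h⟩
      have : (H.mulVec u) r = (H.mulVec y) r := by
        unfold Matrix.mulVec dotProduct
        apply Finset.sum_congr rfl
        intro j _
        show H r j * u j = H r j * y j
        by_cases hjK : j ∈ K
        · rw [hKx j hjK]; ring
        · simp [hu, hjK]
      rw [this, hsyn]
  have hle := hmin u hsynu
  -- split the counts over K and its complement
  have split : ∀ v : Fin N → ZMod 2,
      (Finset.univ.filter (fun i => v i ≠ 0)).card =
        (K.filter (fun i => v i ≠ 0)).card +
          ((Finset.univ \ K).filter (fun i => v i ≠ 0)).card := by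
    intro v
    rw [← Finset.card_union_of_disjoint, ← Finset.filter_union,
      Finset.union_sdiff_of_subset (Finset.subset_univ K)]
    exact Finset.disjoint_filter_filter (Finset.disjoint_sdiff)
  rw [split u, split y] at hle
  have h1 : (K.filter (fun i => u i ≠ 0)).card = (K.filter (fun i => x i ≠ 0)).card := by
    congr 1
    apply Finset.filter_congr
    intro i hi
    simp [hu, hi]
  have h2 : ((Finset.univ \ K).filter (fun i => u i ≠ 0)).card =
      ((Finset.univ \ K).filter (fun i => y i ≠ 0)).card := by
    congr 1
    apply Finset.filter_congr
    intro i hi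
    simp only [Finset.mem_sdiff] at hi
    simp [hu, hi.2]
  rw [h1, h2] at hle
  omega
end

section
/- If x, y ∈ F_2^N satisfy Hx = Hy, and D = {i : x_i ≠ y_i} decomposes under the check-adjacency graph into maximal connected components K_1, …, K_r, then for every j, the vector z obtained from y by replacing y with x on K_j still satisfies Hz = Hy. -/
open scoped Classical

/-- If `x, y ∈ F_2^N` satisfy `Hx = Hy`, and `K` is a maximal connected
component of the mismatch set `D = {i : x i ≠ y i}` under the check-adjacency graph,
then the vector `z` obtained from `y` by replacing `y` with `x` on `K` still satisfies
`Hz = Hy`. -/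
theorem stmt_8 {M N : ℕ} (H : Matrix (Fin M) (Fin N) (ZMod 2))
    (x y : Fin N → ZMod 2)
    (hsyn : H.mulVec x = H.mulVec y)
    (adj : Fin N → Fin N → Prop)
    (hadj : ∀ i j, adj i j ↔ i ≠ j ∧ ∃ r : Fin M, H r i ≠ 0 ∧ H r j ≠ 0)
    (K : Finset (Fin N))
    (hKD : ∀ i ∈ K, x i ≠ y i)
    (hconn : ∀ i ∈ K, ∀ j ∈ K,
      Relation.ReflTransGen (fun a b => a ∈ K ∧ b ∈ K ∧ adj a b) i j)
    (hmax : ∀ i ∈ K, ∀ j, adj i j → x j ≠ y j → j ∈ K) :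
    H.mulVec (fun i => if i ∈ K then x i else y i) = H.mulVec y := by
  funext r
  simp only [Matrix.mulVec, dotProduct]
  by_cases hc : ∃ i ∈ K, H r i ≠ 0
  · obtain ⟨i, hiK, hri⟩ := hc
    have hx : ∑ j, H r j * (if j ∈ K then x j else y j) = ∑ j, H r j * x j := by
      apply Finset.sum_congr rfl
      intro j _
      by_cases hrj : H r j = 0
      · simp [hrj]
      · by_cases hjK : j ∈ K
        · simp [hjK]
        · have hxy : x j = y j := by
            by_contra hne
            apply hjK
            by_cases hij : i = j
            · exact hij ▸ hiK
            · exact hmax i hiK j ((hadj i j).2 ⟨hij, r, hri, hrj⟩) hne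
          simp [hjK, hxy]
    rw [hx]
    exact congrFun hsyn r
  · push_neg at hc
    apply Finset.sum_congr rfl
    intro j _
    by_cases hrj : H r j = 0
    · simp [hrj]
    · have : j ∉ K := fun h => hrj (hc j h)
      simp [this]
end

section
/- Meta-check factorization in the alternating Tanner graph: in the ATG graph built from CSS matrices H^X, H^Z with H^Z(H^X)^T = 0, for an even layer t and a Z-check c, the set A = {(c, t−1), (c, t+1)} ∪ {(i, t) : H^Z_{c,i} = 1} has even edge-boundary: every vertex of the ATG graph has an even number of neighbors in A. -/
/-- Vertices of the alternating Tanner graph (ATG): code qubits `(i,t)`,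
Z-check qubits `(c,t)` and X-check qubits `(d,t)`, each with a layer index `t`. -/
inductive ATGVertex (n mz mx : ℕ) where
  | code (i : Fin n) (t : ℕ)
  | zcheck (c : Fin mz) (t : ℕ)
  | xcheck (d : Fin mx) (t : ℕ)

/-- The (one-sided) edge relation of the ATG on layers `1,…,2T+1`:
code vertices are joined vertically between consecutive layers; on odd layers the
Z-Tanner graph is placed, on even layers the X-Tanner graph. -/
def atgRel {n mz mx : ℕ} (HX : Matrix (Fin mx) (Fin n) (ZMod 2))
    (HZ : Matrix (Fin mz) (Fin n) (ZMod 2)) (T : ℕ) :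
    ATGVertex n mz mx → ATGVertex n mz mx → Prop
  | .code i t, .code j s => j = i ∧ s = t + 1 ∧ 1 ≤ t ∧ s ≤ 2 * T + 1
  | .zcheck c t, .code i s => s = t ∧ Odd t ∧ 1 ≤ t ∧ t ≤ 2 * T + 1 ∧ HZ c i = 1
  | .xcheck d t, .code i s => s = t ∧ Even t ∧ 2 ≤ t ∧ t ≤ 2 * T ∧ HX d i = 1
  | _, _ => False

/-- The (symmetrized) adjacency relation of the ATG. -/
def atgAdj {n mz mx : ℕ} (HX : Matrix (Fin mx) (Fin n) (ZMod 2))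
    (HZ : Matrix (Fin mz) (Fin n) (ZMod 2)) (T : ℕ)
    (a b : ATGVertex n mz mx) : Prop :=
  atgRel HX HZ T a b ∨ atgRel HX HZ T b a

section RelLemmas
variable {n mz mx : ℕ} (HX : Matrix (Fin mx) (Fin n) (ZMod 2))
    (HZ : Matrix (Fin mz) (Fin n) (ZMod 2)) (T : ℕ)

@[simp] lemma atgRel_code_code (i j : Fin n) (a b : ℕ) :
    atgRel HX HZ T (.code i a) (.code j b) ↔
      (j = i ∧ b = a + 1 ∧ 1 ≤ a ∧ b ≤ 2 * T + 1) := Iff.rfl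
@[simp] lemma atgRel_zcheck_code (c : Fin mz) (i : Fin n) (a b : ℕ) :
    atgRel HX HZ T (.zcheck c a) (.code i b) ↔
      (b = a ∧ Odd a ∧ 1 ≤ a ∧ a ≤ 2 * T + 1 ∧ HZ c i = 1) := Iff.rfl
@[simp] lemma atgRel_xcheck_code (d : Fin mx) (i : Fin n) (a b : ℕ) :
    atgRel HX HZ T (.xcheck d a) (.code i b) ↔
      (b = a ∧ Even a ∧ 2 ≤ a ∧ a ≤ 2 * T ∧ HX d i = 1) := Iff.rfl
@[simp] lemma atgRel_code_zcheck (i : Fin n) (c : Fin mz) (a b : ℕ) :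
    ¬ atgRel HX HZ T (.code i a) (.zcheck c b) := fun h => h
@[simp] lemma atgRel_code_xcheck (i : Fin n) (d : Fin mx) (a b : ℕ) :
    ¬ atgRel HX HZ T (.code i a) (.xcheck d b) := fun h => h
@[simp] lemma atgRel_zcheck_zcheck (c c' : Fin mz) (a b : ℕ) :
    ¬ atgRel HX HZ T (.zcheck c a) (.zcheck c' b) := fun h => h
@[simp] lemma atgRel_zcheck_xcheck (c : Fin mz) (d : Fin mx) (a b : ℕ) :
    ¬ atgRel HX HZ T (.zcheck c a) (.xcheck d b) := fun h => h
@[simp] lemma atgRel_xcheck_zcheck (d : Fin mx) (c : Fin mz) (a b : ℕ) :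
    ¬ atgRel HX HZ T (.xcheck d a) (.zcheck c b) := fun h => h
@[simp] lemma atgRel_xcheck_xcheck (d d' : Fin mx) (a b : ℕ) :
    ¬ atgRel HX HZ T (.xcheck d a) (.xcheck d' b) := fun h => h
end RelLemmas

lemma zmod2_mul (a b : ZMod 2) : a * b = if a = 1 ∧ b = 1 then 1 else 0 := by
  revert a b; decide

lemma parity_aux {n mz mx : ℕ} (HX : Matrix (Fin mx) (Fin n) (ZMod 2))
    (HZ : Matrix (Fin mz) (Fin n) (ZMod 2))
    (hCSS : HZ * HX.transpose = 0) (c : Fin mz) (d : Fin mx) :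
    Even (Finset.univ.filter (fun i : Fin n => HZ c i = 1 ∧ HX d i = 1)).card := by
  have h0 : (HZ * HX.transpose) c d = 0 := by rw [hCSS]; rfl
  rw [Matrix.mul_apply] at h0
  have h1 : ∑ i : Fin n, HZ c i * HX.transpose i d
      = ((Finset.univ.filter (fun i : Fin n => HZ c i = 1 ∧ HX d i = 1)).card : ZMod 2) := by
    rw [Finset.card_eq_sum_ones, Nat.cast_sum]
    rw [Finset.sum_filter]
    apply Finset.sum_congr rfl
    intro i _
    simp [Matrix.transpose_apply, zmod2_mul]
  rw [h1] at h0
  exact even_iff_two_dvd.mpr ((ZMod.natCast_eq_zero_iff _ 2).mp h0)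

/-- Meta-check factorization in the ATG. If `HZ · HXᵀ = 0` over `F_2`,
then for an even layer `t ∈ {2,…,2T}` and a Z-check `c`, the set
`A = {(c,t−1), (c,t+1)} ∪ {(i,t) : HZ c i = 1}` has even edge-boundary: every vertex
of the ATG has an even number of neighbors in `A`. -/
theorem stmt_12 {n mz mx : ℕ} (HX : Matrix (Fin mx) (Fin n) (ZMod 2))
    (HZ : Matrix (Fin mz) (Fin n) (ZMod 2)) (T : ℕ)
    (hCSS : HZ * HX.transpose = 0)
    (t : ℕ) (ht_even : Even t) (ht1 : 2 ≤ t) (ht2 : t ≤ 2 * T)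
    (c : Fin mz) :
    ∀ v : ATGVertex n mz mx,
      Even {w : ATGVertex n mz mx |
        (w = .zcheck c (t - 1) ∨ w = .zcheck c (t + 1) ∨
          ∃ i : Fin n, HZ c i = 1 ∧ w = .code i t) ∧
        atgAdj HX HZ T v w}.ncard := by
  have hmod : t % 2 = 0 := Nat.even_iff.mp ht_even
  intro v
  cases v with
  | zcheck c' s =>
      have hE : {w : ATGVertex n mz mx |
          (w = .zcheck c (t - 1) ∨ w = .zcheck c (t + 1) ∨
            ∃ i : Fin n, HZ c i = 1 ∧ w = .code i t) ∧
          atgAdj HX HZ T (.zcheck c' s) w} = ∅ := by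
        ext w
        cases w <;> simp [atgAdj, Nat.odd_iff] <;> intros <;> omega
      rw [hE]; simp
  | xcheck d s =>
      by_cases hs : s = t
      · subst hs
        have hE : {w : ATGVertex n mz mx |
            (w = .zcheck c (s - 1) ∨ w = .zcheck c (s + 1) ∨
              ∃ i : Fin n, HZ c i = 1 ∧ w = .code i s) ∧
            atgAdj HX HZ T (.xcheck d s) w}
            = (fun i => ATGVertex.code i s) ''
              ((Finset.univ.filter (fun i : Fin n => HZ c i = 1 ∧ HX d i = 1)) : Finset (Fin n)) := by
          ext w
          cases w with
          | code i u =>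
              simp only [Set.mem_setOf_eq, atgAdj, atgRel_xcheck_code, atgRel_code_xcheck,
                or_false, Set.mem_image, Finset.coe_filter, Set.mem_setOf_eq,
                Finset.mem_univ, true_and, ATGVertex.code.injEq, reduceCtorEq, false_or]
              constructor
              · rintro ⟨⟨i', hi', rfl, h2⟩, -, -, -, -, hx⟩
                exact ⟨i, ⟨hi', hx⟩, rfl, h2.symm⟩
              · rintro ⟨i', ⟨hz', hx'⟩, rfl, rfl⟩
                exact ⟨⟨i', hz', rfl, rfl⟩, rfl, ht_even, ht1, ht2, hx'⟩
          | zcheck c'' u => simp [atgAdj]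
          | xcheck d'' u => simp [atgAdj]
        rw [hE, Set.ncard_image_of_injective _ (fun a b h => by simpa using h),
          Set.ncard_coe_finset]
        exact parity_aux HX HZ hCSS c d
      · have hE : {w : ATGVertex n mz mx |
            (w = .zcheck c (t - 1) ∨ w = .zcheck c (t + 1) ∨
              ∃ i : Fin n, HZ c i = 1 ∧ w = .code i t) ∧
            atgAdj HX HZ T (.xcheck d s) w} = ∅ := by
          ext w
          cases w <;> simp [atgAdj] <;> intros <;> omega
        rw [hE]; simp
  | code j s =>
      by_cases hz : HZ c j = 1
      · by_cases hs1 : s = t - 1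
        · subst hs1
          have hE : {w : ATGVertex n mz mx |
              (w = .zcheck c (t - 1) ∨ w = .zcheck c (t + 1) ∨
                ∃ i : Fin n, HZ c i = 1 ∧ w = .code i t) ∧
              atgAdj HX HZ T (.code j (t - 1)) w}
              = {ATGVertex.zcheck c (t - 1), ATGVertex.code j t} := by
            ext w
            cases w with
            | code i u =>
                simp only [Set.mem_setOf_eq, atgAdj, atgRel_code_code, atgRel_code_zcheck,
                  Set.mem_insert_iff, Set.mem_singleton_iff, ATGVertex.code.injEq,
                  reduceCtorEq, false_or]
                constructor
                · rintro ⟨⟨i', hi', rfl, rfl⟩, h | h⟩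
                  · exact ⟨h.1, rfl⟩
                  · omega
                · rintro ⟨rfl, rfl⟩
                  exact ⟨⟨_, hz, rfl, rfl⟩, Or.inl ⟨rfl, by omega, by omega, by omega⟩⟩
            | zcheck c'' u =>
                simp only [Set.mem_setOf_eq, atgAdj, atgRel_code_zcheck, atgRel_zcheck_code,
                  Set.mem_insert_iff, Set.mem_singleton_iff, ATGVertex.zcheck.injEq,
                  reduceCtorEq, false_or, or_false, false_and, and_false, exists_false]
                constructor
                · rintro ⟨⟨rfl, rfl⟩ | ⟨rfl, rfl⟩, h2⟩
                  · exact ⟨rfl, rfl⟩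
                  · exact absurd h2.1 (by omega)
                · rintro ⟨rfl, rfl⟩
                  refine ⟨Or.inl ⟨rfl, rfl⟩, rfl, ?_, by omega, by omega, hz⟩
                  exact ⟨t / 2 - 1, by omega⟩
            | xcheck d'' u => simp [atgAdj]
          rw [hE, Set.ncard_pair (by simp)]
          exact even_two
        · by_cases hs2 : s = t + 1
          · subst hs2
            have hE : {w : ATGVertex n mz mx |
                (w = .zcheck c (t - 1) ∨ w = .zcheck c (t + 1) ∨
                  ∃ i : Fin n, HZ c i = 1 ∧ w = .code i t) ∧
                atgAdj HX HZ T (.code j (t + 1)) w}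
                = {ATGVertex.zcheck c (t + 1), ATGVertex.code j t} := by
              ext w
              cases w with
              | code i u =>
                  simp only [Set.mem_setOf_eq, atgAdj, atgRel_code_code, atgRel_code_zcheck,
                    Set.mem_insert_iff, Set.mem_singleton_iff, ATGVertex.code.injEq,
                    reduceCtorEq, false_or]
                  constructor
                  · rintro ⟨⟨i', hi', rfl, rfl⟩, h | h⟩
                    · omega
                    · exact ⟨h.1.symm, rfl⟩
                  · rintro ⟨rfl, rfl⟩
                    exact ⟨⟨_, hz, rfl, rfl⟩, Or.inr ⟨rfl, by omega, by omega, by omega⟩⟩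
              | zcheck c'' u =>
                  simp only [Set.mem_setOf_eq, atgAdj, atgRel_code_zcheck, atgRel_zcheck_code,
                    Set.mem_insert_iff, Set.mem_singleton_iff, ATGVertex.zcheck.injEq,
                    reduceCtorEq, false_or, or_false, false_and, and_false, exists_false]
                  constructor
                  · rintro ⟨⟨rfl, rfl⟩ | ⟨rfl, rfl⟩, h2⟩
                    · exact absurd h2.1 (by omega)
                    · exact ⟨rfl, rfl⟩
                  · rintro ⟨rfl, rfl⟩
                    refine ⟨Or.inr ⟨rfl, rfl⟩, rfl, ?_, by omega, by omega, hz⟩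
                    exact ⟨t / 2, by omega⟩
              | xcheck d'' u => simp [atgAdj]
            rw [hE, Set.ncard_pair (by simp)]
            exact even_two
          · have hE : {w : ATGVertex n mz mx |
                (w = .zcheck c (t - 1) ∨ w = .zcheck c (t + 1) ∨
                  ∃ i : Fin n, HZ c i = 1 ∧ w = .code i t) ∧
                atgAdj HX HZ T (.code j s) w} = ∅ := by
              ext w
              cases w <;> simp [atgAdj, Nat.odd_iff] <;> intros <;> omega
            rw [hE]; simp
      · have hE : {w : ATGVertex n mz mx |
            (w = .zcheck c (t - 1) ∨ w = .zcheck c (t + 1) ∨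
              ∃ i : Fin n, HZ c i = 1 ∧ w = .code i t) ∧
            atgAdj HX HZ T (.code j s) w} = ∅ := by
          ext w
          cases w with
          | code i u =>
              simp only [Set.mem_setOf_eq, Set.mem_empty_iff_false, iff_false, not_and]
              rintro (h | h | ⟨i', hi', h⟩)
              · simp at h
              · simp at h
              · injection h with h1 h2; subst h1; subst h2
                rintro (h' | h')
                · exact hz (h'.1 ▸ hi')
                · exact hz (by rw [h'.1]; exact hi')
          | zcheck c'' u =>
              simp only [Set.mem_setOf_eq, Set.mem_empty_iff_false, iff_false, not_and]
              rintro (h | h | ⟨i', hi', h⟩)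
              · injection h with h1 h2; subst h1; subst h2
                rintro (h' | h')
                · exact h'
                · exact hz h'.2.2.2.2
              · injection h with h1 h2; subst h1; subst h2
                rintro (h' | h')
                · exact h'
                · exact hz h'.2.2.2.2
              · simp at h
          | xcheck d'' u => simp [atgAdj]
        rw [hE]; simp
end

section
/- Logical-X stabilizer factorization in the ATG: if α ∈ F_2^n satisfies H^Z α = 0 (α supports a logical or stabilizer X operator), then the set A = {(i, t) : α_i = 1, t odd} in the ATG graph has even edge-boundary at every vertex not lying in A itself; consequently ∏_{(i,t)∈A} G_{(i,t)} is an X-type operator supported only on A. -/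
lemma aux_even_card {mz n : ℕ} (HZ : Matrix (Fin mz) (Fin n) (ZMod 2))
    (α : Fin n → ZMod 2) (c : Fin mz) (h : ∑ i, HZ c i * α i = 0) :
    Even (Finset.univ.filter (fun i => HZ c i = 1 ∧ α i = 1)).card := by
  have h1 : ∀ x y : ZMod 2, x * y = if x = 1 ∧ y = 1 then (1 : ZMod 2) else 0 := by decide
  have h3 : ∑ i, HZ c i * α i
      = ((Finset.univ.filter (fun i => HZ c i = 1 ∧ α i = 1)).card : ZMod 2) := by
    rw [← Finset.sum_boole]
    exact Finset.sum_congr rfl fun i _ => h1 _ _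
  have h2 : ((Finset.univ.filter (fun i => HZ c i = 1 ∧ α i = 1)).card : ZMod 2) = 0 :=
    h3.symm.trans h
  have := (ZMod.natCast_eq_zero_iff _ 2).mp h2
  exact even_iff_two_dvd.mpr this

/-- Logical-X stabilizer factorization in the ATG. If `α ∈ F_2^n`
satisfies `HZ α = 0`, then the set `A = {(i,t) : α i = 1, t odd, t ≤ 2T+1}` of code
vertices on odd layers has even edge-boundary at every vertex not in `A`; hence
`∏_{(i,t)∈A} G_{(i,t)}` is an X-type operator supported only on `A`. -/
theorem stmt_13 {n mz mx : ℕ} (HX : Matrix (Fin mx) (Fin n) (ZMod 2))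
    (HZ : Matrix (Fin mz) (Fin n) (ZMod 2)) (T : ℕ)
    (hCSS : HX * HZ.transpose = 0)
    (α : Fin n → ZMod 2) (hα : HZ.mulVec α = 0) :
    ∀ v : ATGVertex n mz mx,
      (¬ ∃ i t, α i = 1 ∧ Odd t ∧ t ≤ 2 * T + 1 ∧ v = .code i t) →
      Even {w : ATGVertex n mz mx |
        (∃ i t, α i = 1 ∧ Odd t ∧ t ≤ 2 * T + 1 ∧ w = .code i t) ∧
        atgAdj HX HZ T v w}.ncard := by
  intro v hv
  set S := {w : ATGVertex n mz mx |
        (∃ i t, α i = 1 ∧ Odd t ∧ t ≤ 2 * T + 1 ∧ w = ATGVertex.code i t) ∧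
        atgAdj HX HZ T v w} with hS
  match v with
  | .xcheck d t =>
      have : S = ∅ := by
        ext w
        simp only [hS, Set.mem_setOf_eq, Set.mem_empty_iff_false, iff_false]
        rintro ⟨⟨i, s, hαi, hodd, hle, rfl⟩, hadj⟩
        rcases hadj with h | h
        · obtain ⟨rfl, hev, -⟩ := h
          exact (Nat.not_even_iff_odd.mpr hodd) hev
        · exact h
      rw [this, Set.ncard_empty]
      exact Even.zero
  | .zcheck c t =>
      by_cases hct : Odd t ∧ t ≤ 2 * T + 1
      · have hSet : S = (fun i => ATGVertex.code i t) '' {i | HZ c i = 1 ∧ α i = 1} := by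
          ext w
          simp only [hS, Set.mem_setOf_eq, Set.mem_image]
          constructor
          · rintro ⟨⟨i, s, hαi, hodd, hle, rfl⟩, hadj⟩
            rcases hadj with h | h
            · obtain ⟨rfl, -, -, -, hz⟩ := h
              exact ⟨i, ⟨hz, hαi⟩, rfl⟩
            · exact absurd h id
          · rintro ⟨i, ⟨hz, hαi⟩, rfl⟩
            refine ⟨⟨i, t, hαi, hct.1, hct.2, rfl⟩, Or.inl ?_⟩
            exact ⟨rfl, hct.1, hct.1.pos, hct.2, hz⟩
        have hinj : Function.Injective (fun i : Fin n => ATGVertex.code (mz := mz) (mx := mx) i t) := by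
          intro a b hab
          simp only [ATGVertex.code.injEq] at hab
          exact hab.1
        have hfin : {i : Fin n | HZ c i = 1 ∧ α i = 1}
            = ↑(Finset.univ.filter (fun i => HZ c i = 1 ∧ α i = 1)) := by
          ext i; simp
        rw [hSet, Set.ncard_image_of_injective _ hinj, hfin, Set.ncard_coe_finset]
        apply aux_even_card HZ α c
        have := congrFun hα c
        simpa [Matrix.mulVec, dotProduct] using this
      · have : S = ∅ := by
          ext w
          simp only [hS, Set.mem_setOf_eq, Set.mem_empty_iff_false, iff_false]
          rintro ⟨⟨i, s, hαi, hodd, hle, rfl⟩, hadj⟩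
          rcases hadj with h | h
          · obtain ⟨rfl, hot, -, hlt, -⟩ := h
            exact hct ⟨hot, hlt⟩
          · exact h
        rw [this, Set.ncard_empty]
        exact Even.zero
  | .code j s =>
      by_cases hj : α j = 1 ∧ Even s ∧ 2 ≤ s ∧ s ≤ 2 * T
      · obtain ⟨hαj, hev, hs2, hsT⟩ := hj
        have hSet : S = {ATGVertex.code j (s - 1), ATGVertex.code j (s + 1)} := by
          ext w
          simp only [hS, Set.mem_setOf_eq, Set.mem_insert_iff, Set.mem_singleton_iff]
          constructor
          · rintro ⟨⟨i, u, hαi, hodd, hle, rfl⟩, hadj⟩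
            rcases hadj with h | h
            · obtain ⟨rfl, rfl, -, -⟩ := h
              right; rfl
            · obtain ⟨rfl, rfl, -, -⟩ := h
              left
              congr 1 <;> omega
          · rw [Nat.even_iff] at hev
            have hodd1 : Odd (s - 1) := by rw [Nat.odd_iff]; omega
            have hodd2 : Odd (s + 1) := by rw [Nat.odd_iff]; omega
            rintro (rfl | rfl)
            · exact ⟨⟨j, s - 1, hαj, hodd1, by omega, rfl⟩,
                Or.inr ⟨rfl, by omega, by omega, by omega⟩⟩
            · exact ⟨⟨j, s + 1, hαj, hodd2, by omega, rfl⟩,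
                Or.inl (by refine ⟨rfl, rfl, ?_, ?_⟩ <;> omega)⟩
        rw [hSet, Set.ncard_pair (by simp [ATGVertex.code.injEq]) ]
        exact even_two
      · have : S = ∅ := by
          ext w
          simp only [hS, Set.mem_setOf_eq, Set.mem_empty_iff_false, iff_false]
          rintro ⟨⟨i, u, hαi, hodd, hle, rfl⟩, hadj⟩
          have hvA : ¬ (α j = 1 ∧ Odd s ∧ s ≤ 2 * T + 1) := by
            intro ⟨h1, h2, h3⟩
            exact hv ⟨j, s, h1, h2, h3, rfl⟩
          rw [Nat.odd_iff] at hodd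
          rcases hadj with h | h
          · obtain ⟨rfl, rfl, hs1, hle2⟩ := h
            apply hj
            refine ⟨hαi, ?_, by omega, by omega⟩
            rw [Nat.even_iff]; omega
          · obtain ⟨rfl, rfl, hu1, hle2⟩ := h
            apply hj
            refine ⟨hαi, ?_, by omega, by omega⟩
            rw [Nat.even_iff]; omega
        rw [this, Set.ncard_empty]
        exact Even.zero
end
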